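/- Let A be a countable nonempty alphabet, let (μⁱ)_{i≥1} be a sequence of probability mass functions on A, and let Z be a set of positions over A. If ∑'_{p = ⟨a₁,a₂,…,a_n⟩ ∈ Z} ∏_{i=1}^{⌊n/2⌋} μⁱ(a_{2i}) < 1, then Player 2 has a winning strategy for Z. -/

import Mathlib

/-!
Let Player 2 draw its `i`-th reply at random from `μ i`. The potential of a position `q` sums, over
the positions of `Z` extending `q`, the probability that these random replies after `q` agree with
them; the potential of the empty position is the sum in the hypothesis. A move of Player 1 can only
drop terms from this sum, while at a move of Player 2 the potential is at least the `μ`-average of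
the potentials of the possible replies, so Player 2 can keep the potential below `1`. A position in
`Z` has potential at least `1`, hence is never reached.
-/

open scoped ENNReal

variable {A : Type*}

/-- A position `p` is a prefix of the play `x`. -/
def PrefixOfPlay (p : List A) (x : ℕ → A) : Prop :=
  List.ofFn (fun i : Fin p.length => x i) = p

/-- The play `x` is consistent with the Player 1 strategy `s₁`. -/
def Consistent1 (s₁ : List A → A) (x : ℕ → A) : Prop :=
  ∀ n : ℕ, x (2 * n) = s₁ (List.ofFn (fun i : Fin (2 * n) => x i))

/-- The play `x` is consistent with the Player 2 strategy `s₂`. -/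
def Consistent2 (s₂ : List A → A) (x : ℕ → A) : Prop :=
  ∀ n : ℕ, x (2 * n + 1) = s₂ (List.ofFn (fun i : Fin (2 * n + 1) => x i))

/-- Player 1 has a winning strategy for the open set determined by `Z`. -/
def P1Wins (Z : Set (List A)) : Prop :=
  ∃ s₁ : List A → A, ∀ x : ℕ → A, Consistent1 s₁ x → ∃ p ∈ Z, PrefixOfPlay p x

/-- Player 2 has a winning strategy for the open set determined by `Z`. -/
def P2Wins (Z : Set (List A)) : Prop :=
  ∃ s₂ : List A → A, ∀ x : ℕ → A, Consistent2 s₂ x → ¬ ∃ p ∈ Z, PrefixOfPlay p x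

theorem p2Wins_of_invariant [Nonempty A] (Z : Set (List A)) (S : List A → Prop) (h_nil : S [])
    (h_not_mem : ∀ q, S q → q ∉ Z) (h_even : ∀ q a, S q → Even q.length → S (q ++ [a]))
    (h_odd : ∀ q, S q → Odd q.length → ∃ a, S (q ++ [a])) : P2Wins Z := by
  refine ⟨fun q => Classical.epsilon fun a => S (q ++ [a]), fun x hx => ?_⟩
  have h_inv : ∀ n, S (List.ofFn fun i : Fin n => x i) := by
    intro n
    induction n with
    | zero => simpa using h_nil
    | succ n ih =>
      rw [List.ofFn_succ_last]
      rcases Nat.even_or_odd n with hn | ⟨k, rfl⟩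
      · exact h_even _ _ ih (by simpa using hn)
      · simp only [Fin.val_castSucc, Fin.val_last, hx k]
        exact Classical.epsilon_spec (h_odd _ ih (by simp))
  rintro ⟨p, hpZ, hp⟩
  exact h_not_mem p (hp ▸ h_inv p.length) hpZ

theorem getElem?_eq_of_append_singleton_prefix {q p : List A} {a : A} (h : q ++ [a] <+: p) :
    p[q.length]? = some a := by
  obtain ⟨r, rfl⟩ := h
  simp

section Potential

variable (μ : ℕ → A → NNReal) (Z : Set (List A))

noncomputable def replyWeight (p : List A) (i : ℕ) : ℝ≥0∞ :=
  (p[2 * i + 1]?).elim 1 fun a => μ i a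

noncomputable def residualWeight (m : ℕ) (p : List A) : ℝ≥0∞ :=
  ∏ i ∈ Finset.Ico m (p.length / 2), replyWeight μ p i

noncomputable def potential (q : List A) : ℝ≥0∞ :=
  ∑' p : {p // p ∈ Z ∧ q <+: p}, residualWeight μ (q.length / 2) p

theorem residualWeight_zero (p : List A) : residualWeight μ 0 p = ∏ i : Fin (p.length / 2),
    (μ i.val (p.get ⟨2 * i.val + 1, by have := i.isLt; omega⟩) : ℝ≥0∞) := by
  rw [residualWeight, Nat.Ico_zero_eq_range, ← Fin.prod_univ_eq_prod_range]
  refine Finset.prod_congr rfl fun i _ => ?_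
  simp [replyWeight, List.getElem?_eq_getElem (by omega : 2 * i.1 + 1 < p.length)]

theorem potential_nil : potential μ Z [] = ∑' p : Z, residualWeight μ 0 p := by
  rw [potential, List.length_nil, Nat.zero_div]
  exact ((Equiv.subtypeEquivRight (p := (· ∈ Z)) (q := fun p => p ∈ Z ∧ [] <+: p)
    fun _ => by simp).tsum_eq fun p => residualWeight μ 0 p).symm

theorem one_le_potential_of_mem {q : List A} (hq : q ∈ Z) : 1 ≤ potential μ Z q := by
  calc 1 = residualWeight μ (q.length / 2) q := by simp [residualWeight]
    _ ≤ potential μ Z q :=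
      ENNReal.le_tsum (f := fun p : {p // p ∈ Z ∧ q <+: p} => residualWeight μ _ p)
        ⟨q, hq, List.prefix_refl q⟩

theorem potential_append_le {q : List A} (hq : Even q.length) (a : A) :
    potential μ Z (q ++ [a]) ≤ potential μ Z q := by
  have hlen : (q ++ [a]).length / 2 = q.length / 2 := by
    obtain ⟨k, hk⟩ := hq; simp; omega
  rw [potential, potential, hlen]
  exact ENNReal.tsum_comp_le_tsum_of_injective
    (f := fun p : {p // p ∈ Z ∧ q ++ [a] <+: p} =>
      (⟨p.1, p.2.1, (List.prefix_append q [a]).trans p.2.2⟩ : {p // p ∈ Z ∧ q <+: p}))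
    (fun _ _ h => Subtype.ext (congrArg Subtype.val h :)) _

theorem residualWeight_eq_mul {m : ℕ} {p : List A} (h : m < p.length / 2) :
    residualWeight μ m p = replyWeight μ p m * residualWeight μ (m + 1) p :=
  Finset.prod_eq_prod_Ico_succ_bot h _

theorem tsum_mul_potential_append_le {q : List A} {n : ℕ} (hq : q.length = 2 * n + 1) :
    ∑' a, (μ n a : ℝ≥0∞) * potential μ Z (q ++ [a]) ≤ potential μ Z q := by
  have h_reply (a : A) (p : {p // p ∈ Z ∧ q ++ [a] <+: p}) : p.1[2 * n + 1]? = some a :=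
    hq ▸ getElem?_eq_of_append_singleton_prefix p.2.2
  calc ∑' a, (μ n a : ℝ≥0∞) * potential μ Z (q ++ [a])
      = ∑' a, ∑' p : {p // p ∈ Z ∧ q ++ [a] <+: p}, residualWeight μ n p := by
        refine tsum_congr fun a => ?_
        have hlen : (q ++ [a]).length / 2 = n + 1 := by simp; omega
        rw [potential, hlen, ← ENNReal.tsum_mul_left]
        refine tsum_congr fun p => ?_
        have hn : n < p.1.length / 2 := by
          have := (List.getElem?_eq_some_iff.1 (h_reply a p)).1; omega
        rw [residualWeight_eq_mul μ hn, replyWeight, h_reply a p, Option.elim_some]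
    _ = ∑' x : Σ a, {p // p ∈ Z ∧ q ++ [a] <+: p}, residualWeight μ n x.2 :=
        (ENNReal.tsum_sigma fun a (p : {p // p ∈ Z ∧ q ++ [a] <+: p}) =>
          residualWeight μ n p).symm
    _ ≤ ∑' p : {p // p ∈ Z ∧ q <+: p}, residualWeight μ n p := by
        refine ENNReal.tsum_comp_le_tsum_of_injective
          (f := fun x : Σ a, {p // p ∈ Z ∧ q ++ [a] <+: p} =>
            (⟨x.2, x.2.2.1, (List.prefix_append q [x.1]).trans x.2.2.2⟩ :
              {p // p ∈ Z ∧ q <+: p})) ?_ (fun p => residualWeight μ n p)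
        rintro ⟨a, p⟩ ⟨a', p'⟩ h
        have hp : p.1 = p'.1 := congrArg Subtype.val h
        obtain rfl : a = a' := Option.some_injective _ <| by
          rw [← h_reply a p, ← h_reply a' p', hp]
        exact congrArg (Sigma.mk a) (Subtype.ext hp)
    _ = potential μ Z q := by rw [potential, hq, Nat.mul_add_div two_pos]; rfl

theorem exists_potential_append_lt_one (hμ : ∀ i, ∑' a, μ i a = 1) {q : List A}
    (hq : Odd q.length) (hV : potential μ Z q < 1) : ∃ a, potential μ Z (q ++ [a]) < 1 := by
  obtain ⟨n, hn⟩ := hq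
  by_contra! h
  have hs : Summable (μ n) := by
    by_contra hs
    simpa [tsum_eq_zero_of_not_summable hs] using hμ n
  refine hV.not_ge ?_
  calc 1 = ∑' a, (μ n a : ℝ≥0∞) := by rw [← ENNReal.coe_tsum hs, hμ n, ENNReal.coe_one]
    _ ≤ ∑' a, (μ n a : ℝ≥0∞) * potential μ Z (q ++ [a]) :=
        ENNReal.tsum_le_tsum fun a => le_mul_of_one_le_right' (h a)
    _ ≤ potential μ Z q := tsum_mul_potential_append_le μ Z hn

end Potential

/-- If `(μⁱ)` is a sequence of probability mass functions on a countable alphabet `A`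
and `∑'_{p = ⟨a₁,…,a_n⟩ ∈ Z} ∏_{i=1}^{⌊n/2⌋} μⁱ(a_{2i}) < 1`, then Player 2 has a
winning strategy for `Z`. (Here `μ i` is the pmf used for stage `i+1`, i.e. `μ^{i+1}`.) -/
theorem measures_sum_lt_one_imp_player2_wins
    (μ : ℕ → A → NNReal) (hμ : ∀ i : ℕ, ∑' a : A, μ i a = 1) (Z : Set (List A))
    (h : ∑' p : Z, ∏ i : Fin (p.1.length / 2),
        (μ i.val (p.1.get ⟨2 * i.val + 1, by have := i.isLt; omega⟩) : ℝ≥0∞) < 1) :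
    P2Wins Z := by
  have : Nonempty A := by
    by_contra hA
    rw [not_nonempty_iff] at hA
    simpa using hμ 0
  have h_nil : potential μ Z [] < 1 := by
    simpa only [potential_nil, residualWeight_zero] using h
  exact p2Wins_of_invariant Z (potential μ Z · < 1) h_nil
    (fun _ hV hq => (one_le_potential_of_mem μ Z hq).not_gt hV)
    (fun _ a hV hq => (potential_append_le μ Z hq a).trans_lt hV)
    (fun _ hV hq => exists_potential_append_lt_one μ Z hμ hq hV)
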